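/- arXiv:1806.05562 — 6 statements merged into one kernel-verified Lean document; each statement's English description precedes it below -/
import Mathlib

section
/- Let G = (V, E) be a simple connected graph with |G| ≥ 5 that can be constructed from a path P: v_1 v_2 v_3 by adding one vertex at a time so that each newly added vertex v_m (m ≥ 4) is adjacent in G to at most two of the prior vertices v_1, …, v_{m−1}. Then the complement Ḡ has an orthogonal representation by pairwise linearly independent vectors in ℝ^5. -/
open Matrix

/-- `G` on `n ≥ 5` vertices is constructed, with respect to the vertex ordering
`v 0, v 1, …, v (n-1)`, from the path `v 0 - v 1 - v 2` by adding one vertex at a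
time so that each newly added vertex `v i` (for `i ≥ 3`, i.e. `m = i + 1 ≥ 4`
one-indexed) is adjacent in `G` to at most two of the prior vertices. -/
def ConstructedFromPathOrder {n : ℕ} (hn : 5 ≤ n) (G : SimpleGraph (Fin n))
    [DecidableRel G.Adj] (v : Equiv.Perm (Fin n)) : Prop :=
  G.Adj (v ⟨0, by omega⟩) (v ⟨1, by omega⟩) ∧
  G.Adj (v ⟨1, by omega⟩) (v ⟨2, by omega⟩) ∧
  ∀ i : Fin n, 3 ≤ (i : ℕ) →
    (Finset.univ.filter (fun j : Fin n => j < i ∧ G.Adj (v i) (v j))).card ≤ 2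

/-!
Place the vertices one at a time in the given order, keeping every `r + 1` of the vectors placed
so far linearly independent (here `r = 2`). The vector of a new vertex has to lie in the orthogonal
complement `W` of the vectors of its at most `r` earlier neighbours, and `dim W ≥ r + 1` in
dimension `2r + 1`. Inside `W` it has to avoid finitely many subspaces: the hyperplanes `(g j)ᗮ` of
the earlier non-neighbours `j`, which do not contain `W` because `g j` is not in the span of the
neighbours' vectors, and the spans of any `r` earlier vectors, which are too small to contain `W`.
Over an infinite field no space is a finite union of proper subspaces, so such a vector exists.
-/

open Finset Module Submodule RealInnerProductSpace

theorem Submodule.exists_mem_forall_notMem_of_finite {K V : Type*} [DivisionRing K] [Infinite K]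
    [AddCommGroup V] [Module K V] (W : Submodule K V) {𝒰 : Set (Submodule K V)}
    (h𝒰 : 𝒰.Finite) (hW : ∀ U ∈ 𝒰, ¬W ≤ U) : ∃ x ∈ W, ∀ U ∈ 𝒰, x ∉ U := by
  have := h𝒰.to_subtype
  by_contra! h
  obtain ⟨⟨U, hU⟩, htop⟩ := Subspace.exists_eq_top_of_iUnion_eq_univ
    (p := fun U : 𝒰 ↦ (U : Submodule K V).comap W.subtype) <| Set.eq_univ_of_forall fun y ↦ by
      obtain ⟨U, hU, hy⟩ := h y y.2
      exact Set.mem_iUnion.2 ⟨⟨U, hU⟩, hy⟩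
  exact hW U hU (comap_subtype_eq_top.1 htop)

theorem finrank_span_image_finset_le {K V ι : Type*} [DivisionRing K] [AddCommGroup V]
    [Module K V] (g : ι → V) (t : Finset ι) : finrank K (span K (g '' t)) ≤ #t := by
  classical
  rw [← coe_image]
  exact (finrank_span_finset_le_card _).trans card_image_le

section LinearIndepOnSmallSubsets

variable {K V ι : Type*} [DivisionRing K] [AddCommGroup V] [Module K V]

variable (K) in
def LinearIndepOnSmallSubsets (r : ℕ) (g : ι → V) (s : Finset ι) : Prop :=
  ∀ t ⊆ s, #t ≤ r → LinearIndepOn K g (t : Set ι)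

variable {r : ℕ} {g : ι → V} {s t : Finset ι}

theorem LinearIndepOnSmallSubsets.notMem_span [DecidableEq ι]
    (hg : LinearIndepOnSmallSubsets K (r + 1) g s) (hts : t ⊆ s) (ht : #t ≤ r) {j : ι}
    (hjs : j ∈ s) (hjt : j ∉ t) : g j ∉ span K (g '' t) := by
  have := hg (insert j t) (insert_subset hjs hts) ((card_insert_le j t).trans (by omega))
  rw [coe_insert, linearIndepOn_insert (by simpa using hjt)] at this
  exact this.2

theorem LinearIndepOnSmallSubsets.update_insert [DecidableEq ι]
    (hg : LinearIndepOnSmallSubsets K (r + 1) g s) {a : ι} {x : V}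
    (hx : ∀ t ⊆ s, #t ≤ r → x ∉ span K (g '' t)) :
    LinearIndepOnSmallSubsets K (r + 1) (Function.update g a x) (insert a s) := by
  have hEqOn : ∀ t : Finset ι, a ∉ t → Set.EqOn (Function.update g a x) g t := fun t hat i hi ↦
    Function.update_of_ne (ne_of_mem_of_not_mem hi hat) _ _
  intro t hts ht
  by_cases hat : a ∈ t
  · have hts' : t.erase a ⊆ s := fun i hi ↦
      (mem_insert.1 (hts (mem_of_mem_erase hi))).resolve_left (ne_of_mem_erase hi)
    have hcard : #(t.erase a) ≤ r := by rw [card_erase_of_mem hat]; omega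
    rw [← insert_erase hat, coe_insert, linearIndepOn_insert (by simp),
      (hEqOn _ (notMem_erase a t)).image_eq, Function.update_self]
    exact ⟨(hg _ hts' (by omega)).congr (hEqOn _ (notMem_erase a t)).symm, hx _ hts' hcard⟩
  · exact (hg t (fun i hi ↦ (mem_insert.1 (hts hi)).resolve_left (ne_of_mem_of_not_mem hi hat))
      ht).congr (hEqOn t hat).symm

end LinearIndepOnSmallSubsets

variable {E : Type*} [NormedAddCommGroup E] [InnerProductSpace ℝ E] [FiniteDimensional ℝ E]

theorem exists_inner_eq_zero_iff_and_notMem_span {ι : Type*} [DecidableEq ι] {r : ℕ}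
    (hE : 2 * r + 1 ≤ finrank ℝ E) {g : ι → E} {s S : Finset ι}
    (hg : LinearIndepOnSmallSubsets ℝ (r + 1) g s) (hSs : S ⊆ s) (hS : #S ≤ r) :
    ∃ x : E, (∀ j ∈ s, ⟪g j, x⟫ = 0 ↔ j ∈ S) ∧ ∀ t ⊆ s, #t ≤ r → x ∉ span ℝ (g '' t) := by
  set T := span ℝ (g '' S)
  have hTperp : r + 1 ≤ finrank ℝ Tᗮ := by
    have := T.finrank_add_finrank_orthogonal
    have : finrank ℝ T ≤ #S := finrank_span_image_finset_le g S
    omega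
  obtain ⟨x, hxT, hx⟩ := exists_mem_forall_notMem_of_finite (Tᗮ : Submodule ℝ E)
    (𝒰 := (fun j ↦ (ℝ ∙ g j)ᗮ) '' ↑(s \ S) ∪
      (fun t : Finset ι ↦ span ℝ (g '' t)) '' {t | t ⊆ s ∧ #t ≤ r})
    (((s \ S).finite_toSet.image _).union <|
      (s.powerset.finite_toSet.subset fun t ht ↦ mem_powerset.2 ht.1).image _) <| by
    rintro _ (⟨j, hj, rfl⟩ | ⟨t, ⟨-, ht⟩, rfl⟩) hle
    · rw [coe_sdiff, Set.mem_sdiff] at hj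
      rw [orthogonal_le_orthogonal_iff, span_singleton_le_iff_mem] at hle
      exact hg.notMem_span hSs hS hj.1 hj.2 hle
    · have := (finrank_mono hle).trans (finrank_span_image_finset_le g t)
      omega
  refine ⟨x, fun j hj ↦ ⟨fun h ↦ ?_, fun h ↦ ?_⟩, fun t hts ht ↦ hx _ (.inr ⟨t, ⟨hts, ht⟩, rfl⟩)⟩
  · by_contra hjS
    exact hx _ (.inl ⟨j, by simp [hj, hjS], rfl⟩) (mem_orthogonal_singleton_iff_inner_right.2 h)
  · exact inner_right_of_mem_orthogonal (subset_span (Set.mem_image_of_mem g h)) hxT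

theorem SimpleGraph.exists_compl_orthogonal_rep_of_degenerate {V : Type*} [LinearOrder V]
    [Fintype V] (H : SimpleGraph V) [DecidableRel H.Adj] {r : ℕ}
    (hH : ∀ i, #{j | j < i ∧ H.Adj i j} ≤ r) (hE : 2 * r + 1 ≤ finrank ℝ E) :
    ∃ g : V → E, (∀ i j, i ≠ j → (⟪g i, g j⟫ = 0 ↔ H.Adj i j)) ∧
      LinearIndepOnSmallSubsets ℝ (r + 1) g univ := by
  classical
  suffices ∀ s : Finset V, ∃ g : V → E,
      (∀ i ∈ s, ∀ j ∈ s, i ≠ j → (⟪g i, g j⟫ = 0 ↔ H.Adj i j)) ∧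
      LinearIndepOnSmallSubsets ℝ (r + 1) g s by
    obtain ⟨g, hgH, hg⟩ := this univ
    exact ⟨g, fun i j ↦ hgH i (mem_univ i) j (mem_univ j), hg⟩
  intro s
  induction s using Finset.induction_on_max with
  | empty => exact ⟨0, by simp, fun t ht _ ↦ by simp [subset_empty.1 ht]⟩
  | insert a s hlt ih =>
    obtain ⟨g, hgH, hg⟩ := ih
    have hdeg : #(s.filter (H.Adj a)) ≤ r := (card_le_card fun j hj ↦
      mem_filter.2 ⟨mem_univ j, hlt j (mem_filter.1 hj).1, (mem_filter.1 hj).2⟩).trans (hH a)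
    obtain ⟨x, hxH, hx⟩ := exists_inner_eq_zero_iff_and_notMem_span hE hg (filter_subset _ s) hdeg
    have hxH' : ∀ j ∈ s, ⟪g j, x⟫ = 0 ↔ H.Adj a j := fun j hj ↦ by simp [hxH j hj, hj]
    have hne : ∀ j ∈ s, j ≠ a := fun j hj ↦ (hlt j hj).ne
    refine ⟨Function.update g a x, ?_, hg.update_insert hx⟩
    intro i hi j hj hij
    rcases mem_insert.1 hi with rfl | his <;> rcases mem_insert.1 hj with rfl | hjs
    · exact absurd rfl hij
    · rw [Function.update_self, Function.update_of_ne (hne j hjs), real_inner_comm, hxH' j hjs]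
    · rw [Function.update_self, Function.update_of_ne (hne i his), hxH' i his, H.adj_comm]
    · rw [Function.update_of_ne (hne i his), Function.update_of_ne (hne j hjs), hgH i his j hjs hij]

theorem complement_has_orthogonal_representation_general {n : ℕ} (hn : 5 ≤ n)
    (G : SimpleGraph (Fin n)) [DecidableRel G.Adj]
    (hcon : ∃ v : Equiv.Perm (Fin n), ConstructedFromPathOrder hn G v) :
    ∃ f : Fin n → (Fin 5 → ℝ),
      (∀ u w : Fin n, u ≠ w → (f u ⬝ᵥ f w ≠ 0 ↔ Gᶜ.Adj u w)) ∧
      (∀ u w : Fin n, u ≠ w → LinearIndependent ℝ ![f u, f w]) := by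
  obtain ⟨v, -, -, hdeg⟩ := hcon
  have hH : ∀ i, #{j | j < i ∧ (G.comap v).Adj i j} ≤ 2 := fun i ↦ by
    rcases le_or_gt 3 (i : ℕ) with hi | hi
    · exact hdeg i hi
    · exact (card_le_card fun j hj ↦ mem_Iio.2 (mem_filter.1 hj).2.1).trans
        (by rw [Fin.card_Iio]; omega)
  obtain ⟨g, hgG, hg⟩ := (G.comap v).exists_compl_orthogonal_rep_of_degenerate hH
    (E := EuclideanSpace ℝ (Fin 5)) (by simp)
  refine ⟨fun u ↦ WithLp.ofLp (g (v.symm u)), fun u w huw ↦ ?_, fun u w huw ↦ ?_⟩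
  · have h := hgG (v.symm w) (v.symm u) (v.symm.injective.ne huw.symm)
    rw [EuclideanSpace.inner_eq_star_dotProduct, star_trivial] at h
    simpa [huw, G.adj_comm] using h.not
  · have h := hg {v.symm u, v.symm w} (subset_univ _) (card_le_two.trans (by norm_num))
    rw [coe_pair, LinearIndepOn.pair_iff _ (v.symm.injective.ne huw)] at h
    rw [LinearIndependent.pair_iff]
    intro a b hab
    exact h a b (by simpa using congrArg (WithLp.toLp 2) hab)

/-- If a simple connected graph `G` with `|G| ≥ 5` can be constructed from a path
`v 1 v 2 v 3` by adding one vertex at a time, each adjacent to at most two prior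
vertices, then the complement `Ḡ` has an orthogonal representation by pairwise
linearly independent vectors in `ℝ⁵`. -/
theorem complement_has_orthogonal_representation {n : ℕ} (hn : 5 ≤ n)
    (G : SimpleGraph (Fin n)) [DecidableRel G.Adj] (hconn : G.Connected)
    (hcon : ∃ v : Equiv.Perm (Fin n), ConstructedFromPathOrder hn G v) :
    ∃ f : Fin n → (Fin 5 → ℝ),
      (∀ u w : Fin n, u ≠ w → (f u ⬝ᵥ f w ≠ 0 ↔ Gᶜ.Adj u w)) ∧
      (∀ u w : Fin n, u ≠ w → LinearIndependent ℝ ![f u, f w]) :=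
  complement_has_orthogonal_representation_general hn G hcon
end

section
/- Let G = (V, E) be a simple connected graph with |G| ≥ 5 that can be constructed from a path P: v_1 v_2 v_3 by adding one vertex at a time so that each newly added vertex v_m (m ≥ 4) is adjacent in G to at most two of the prior vertices v_1, …, v_{m−1}. Then msr(Ḡ) ≤ 5. -/
open scoped RealInnerProductSpace Matrix

/-- A finite family of submodules, none containing `K`, cannot cover `K`. -/
lemma submodule_avoid {V : Type*} [AddCommGroup V] [Module ℝ V]
    {ι : Type*} (K : Submodule ℝ V) (t : Finset ι) (U : ι → Submodule ℝ V)
    (h : ∀ i ∈ t, ¬ K ≤ U i) : ∃ x ∈ K, ∀ i ∈ t, x ∉ U i := by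
  classical
  induction t using Finset.induction_on with
  | empty => exact ⟨0, K.zero_mem, by simp⟩
  | @insert i₀ t hi₀ ih =>
    obtain ⟨x, hxK, hx⟩ := ih fun i hi => h i (Finset.mem_insert_of_mem hi)
    obtain ⟨y, hyK, hy⟩ := SetLike.not_le_iff_exists.mp (h i₀ (Finset.mem_insert_self i₀ t))
    have key : ∀ j ∈ insert i₀ t, {c : ℝ | x + c • y ∈ U j}.Subsingleton := by
      intro j hj c₁ h₁ c₂ h₂
      by_contra hne
      have hyU : y ∈ U j := by
        have hsub : (c₁ - c₂) • y ∈ U j := by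
          have := (U j).sub_mem h₁ h₂
          have heq : (x + c₁ • y) - (x + c₂ • y) = (c₁ - c₂) • y := by
            rw [sub_smul]; abel
          rwa [heq] at this
        have h12 : c₁ - c₂ ≠ 0 := sub_ne_zero.mpr hne
        have := (U j).smul_mem (c₁ - c₂)⁻¹ hsub
        rwa [smul_smul, inv_mul_cancel₀ h12, one_smul] at this
      rcases Finset.mem_insert.mp hj with rfl | hjt
      · exact hy hyU
      · exact hx j hjt (by
          have := (U j).sub_mem h₁ ((U j).smul_mem c₁ hyU)
          simpa using this)
    have hB : (⋃ j ∈ (insert i₀ t : Finset ι), {c : ℝ | x + c • y ∈ U j}).Finite :=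
      Set.Finite.biUnion (insert i₀ t).finite_toSet fun j hj => (key j hj).finite
    obtain ⟨c, hc⟩ := hB.infinite_compl.nonempty
    refine ⟨x + c • y, K.add_mem hxK (K.smul_mem c hyK), fun j hj hmem => ?_⟩
    exact hc (Set.mem_biUnion hj hmem)

lemma notMem_span_pair_new {V : Type*} [AddCommGroup V] [Module ℝ V] {x c a : V}
    (hx : x ∉ Submodule.span ℝ {c, a}) (hc : c ∉ Submodule.span ℝ {a}) :
    c ∉ Submodule.span ℝ {x, a} := by
  intro hmem
  obtain ⟨α, β, hsum⟩ := Submodule.mem_span_pair.mp hmem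
  by_cases hα : α = 0
  · refine hc ?_
    rw [← hsum, hα, zero_smul, zero_add]
    exact Submodule.smul_mem _ _ (Submodule.mem_span_singleton_self a)
  · refine hx ?_
    have hxe : x = α⁻¹ • c - (α⁻¹ * β) • a := by
      rw [← hsum, smul_add, smul_smul, smul_smul, inv_mul_cancel₀ hα, one_smul]
      abel
    rw [hxe]
    exact Submodule.sub_mem _
      (Submodule.smul_mem _ _ (Submodule.subset_span (Set.mem_insert _ _)))
      (Submodule.smul_mem _ _ (Submodule.subset_span (Set.mem_insert_of_mem _ rfl)))

lemma notMem_span_singleton_new {V : Type*} [AddCommGroup V] [Module ℝ V] {x c : V}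
    (hx : x ∉ Submodule.span ℝ {c}) (hc : c ≠ 0) :
    c ∉ Submodule.span ℝ {x} := by
  intro hmem
  obtain ⟨α, hα⟩ := Submodule.mem_span_singleton.mp hmem
  have hα0 : α ≠ 0 := by rintro rfl; rw [zero_smul] at hα; exact hc hα.symm
  refine hx ?_
  have : x = α⁻¹ • c := by rw [← hα, smul_smul, inv_mul_cancel₀ hα0, one_smul]
  rw [this]
  exact Submodule.smul_mem _ _ (Submodule.mem_span_singleton_self c)

lemma exists_orthogonal_rep {n : ℕ} (G : SimpleGraph (Fin n)) [DecidableRel G.Adj]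
    (v : Equiv.Perm (Fin n))
    (hdeg : ∀ i : Fin n,
      (Finset.univ.filter (fun j : Fin n => j < i ∧ G.Adj (v i) (v j))).card ≤ 2) :
    ∃ w : Fin n → EuclideanSpace ℝ (Fin 5),
      ∀ i j : Fin n, j < i → (⟪w i, w j⟫ = 0 ↔ G.Adj (v i) (v j)) := by
  classical
  suffices H : ∀ m : ℕ, m ≤ n → ∃ w : Fin n → EuclideanSpace ℝ (Fin 5),
      (∀ i j : Fin n, j < i → (i : ℕ) < m → (⟪w i, w j⟫ = 0 ↔ G.Adj (v i) (v j))) ∧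
      (∀ c : Fin n, (c : ℕ) < m → w c ≠ 0) ∧
      (∀ c a : Fin n, (c : ℕ) < m → (a : ℕ) < m → c ≠ a →
        w c ∉ Submodule.span ℝ {w a}) ∧
      (∀ c a b : Fin n, (c : ℕ) < m → (a : ℕ) < m → (b : ℕ) < m → c ≠ a → c ≠ b → a ≠ b →
        w c ∉ Submodule.span ℝ {w a, w b}) by
    obtain ⟨w, hw, -, -, -⟩ := H n le_rfl
    exact ⟨w, fun i j hji => hw i j hji i.isLt⟩
  intro m
  induction m with
  | zero =>
    exact fun _ => ⟨fun _ => 0,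
      fun _ _ _ h => absurd h (Nat.not_lt_zero _),
      fun _ h => absurd h (Nat.not_lt_zero _),
      fun _ _ h _ _ => absurd h (Nat.not_lt_zero _),
      fun _ _ _ h _ _ _ _ _ => absurd h (Nat.not_lt_zero _)⟩
  | succ m ih =>
    intro hm
    obtain ⟨w, hOR, hN0, hN1, hN2⟩ := ih (Nat.le_of_succ_le hm)
    set i : Fin n := ⟨m, hm⟩ with hi_def
    set S : Finset (Fin n) :=
      Finset.univ.filter (fun j : Fin n => j < i ∧ G.Adj (v i) (v j)) with hS_def
    have hScard : S.card ≤ 2 := hdeg i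
    have hSmem : ∀ j ∈ S, (j : ℕ) < m ∧ G.Adj (v i) (v j) := by
      intro j hj
      rw [hS_def, Finset.mem_filter] at hj
      exact ⟨hj.2.1, hj.2.2⟩
    set W : Submodule ℝ (EuclideanSpace ℝ (Fin 5)) := Submodule.span ℝ (w '' ↑S) with hW_def
    have hWrank : Module.finrank ℝ W ≤ 2 := by
      rw [hW_def, ← Finset.coe_image]
      exact le_trans (finrank_span_finset_le_card _)
        (le_trans Finset.card_image_le hScard)
    have hK3 : 3 ≤ Module.finrank ℝ Wᗮ := by
      have h1 := W.finrank_add_finrank_orthogonal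
      rw [finrank_euclideanSpace_fin] at h1
      omega
    -- the family of submodules to avoid
    set U : (Fin n × Fin n) ⊕ (Fin n) ⊕ Unit → Submodule ℝ (EuclideanSpace ℝ (Fin 5)) :=
      fun idx => match idx with
        | Sum.inl p => Submodule.span ℝ {w p.1, w p.2}
        | Sum.inr (Sum.inl c) =>
            if (c : ℕ) < m ∧ c ∉ S then (ℝ ∙ (w c))ᗮ else ⊥
        | Sum.inr (Sum.inr _) => ⊥
      with hU_def
    have hKbot : ¬ Wᗮ ≤ ⊥ := by
      intro hle
      have : Module.finrank ℝ Wᗮ = 0 := by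
        rw [le_bot_iff.mp hle]; exact finrank_bot ℝ _
      omega
    have havoid : ∀ idx ∈ (Finset.univ : Finset ((Fin n × Fin n) ⊕ (Fin n) ⊕ Unit)),
        ¬ Wᗮ ≤ U idx := by
      rintro (⟨a, b⟩ | c | u) -
      · -- span pair: small rank
        intro hle
        have h2 : Module.finrank ℝ (Submodule.span ℝ ({w a, w b} : Set _)) ≤ 2 := by
          have : ({w a, w b} : Set (EuclideanSpace ℝ (Fin 5)))
              = (({a, b} : Finset (Fin n)).image w : Finset _) := by
            simp [Finset.coe_image, Finset.image_insert, Set.image_insert_eq]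
          rw [this]
          exact le_trans (finrank_span_finset_le_card _)
            (le_trans Finset.card_image_le (Finset.card_insert_le _ _ |>.trans (by simp)))
        have hfr := Submodule.finrank_mono hle
        have hUeq : U (Sum.inl (a, b)) = Submodule.span ℝ {w a, w b} := rfl
        rw [hUeq] at hfr
        omega
      · simp only [hU_def]
        by_cases hc : (c : ℕ) < m ∧ c ∉ S
        · rw [if_pos hc]
          intro hle
          have hle2 : (ℝ ∙ (w c))ᗮᗮ ≤ Wᗮᗮ := Submodule.orthogonal_le hle
          rw [Submodule.orthogonal_orthogonal, Submodule.orthogonal_orthogonal] at hle2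
          have hmem : w c ∈ W := hle2 (Submodule.mem_span_singleton_self (w c))
          -- contradiction with the independence invariant
          interval_cases hSc : S.card
          · rw [Finset.card_eq_zero] at hSc
            rw [hW_def, hSc] at hmem
            simp only [Finset.coe_empty, Set.image_empty, Submodule.span_empty,
              Submodule.mem_bot] at hmem
            exact hN0 c hc.1 hmem
          · obtain ⟨a, hSa⟩ := Finset.card_eq_one.mp hSc
            have ha := hSmem a (hSa ▸ Finset.mem_singleton_self a)
            have hca : c ≠ a := fun h => hc.2 (h ▸ hSa ▸ Finset.mem_singleton_self a)
            rw [hW_def, hSa] at hmem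
            simp only [Finset.coe_singleton, Set.image_singleton] at hmem
            exact hN1 c a hc.1 ha.1 hca hmem
          · obtain ⟨a, b, hab, hSab⟩ := Finset.card_eq_two.mp hSc
            have ha := hSmem a (hSab ▸ Finset.mem_insert_self a {b})
            have hb := hSmem b (hSab ▸ Finset.mem_insert_of_mem (Finset.mem_singleton_self b))
            have hca : c ≠ a := fun h => hc.2 (h ▸ hSab ▸ Finset.mem_insert_self a {b})
            have hcb : c ≠ b := fun h =>
              hc.2 (h ▸ hSab ▸ Finset.mem_insert_of_mem (Finset.mem_singleton_self b))
            rw [hW_def, hSab] at hmem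
            simp only [Finset.coe_insert, Finset.coe_singleton, Set.image_insert_eq,
              Set.image_singleton] at hmem
            exact hN2 c a b hc.1 ha.1 hb.1 hca hcb hab hmem
        · rw [if_neg hc]; exact hKbot
      · exact hKbot
    obtain ⟨x, hxK, hx⟩ := submodule_avoid Wᗮ Finset.univ U havoid
    have hpair : ∀ a b : Fin n, x ∉ Submodule.span ℝ {w a, w b} :=
      fun a b => hx (Sum.inl (a, b)) (Finset.mem_univ _)
    have hsingle : ∀ a : Fin n, x ∉ Submodule.span ℝ {w a} := by
      intro a
      have := hpair a a
      rwa [Set.pair_eq_singleton] at this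
    have hxne : x ≠ 0 := by
      intro h0
      exact hx (Sum.inr (Sum.inr ())) (Finset.mem_univ _) (by simp [hU_def, h0])
    have hker : ∀ c : Fin n, (c : ℕ) < m → c ∉ S → ⟪w c, x⟫ ≠ 0 := by
      intro c h1 h2 hz
      refine hx (Sum.inr (Sum.inl c)) (Finset.mem_univ _) ?_
      simp only [hU_def]
      rw [if_pos ⟨h1, h2⟩]
      exact Submodule.mem_orthogonal_singleton_iff_inner_right.mpr hz
    have hS0 : ∀ j ∈ S, ⟪x, w j⟫ = 0 := by
      intro j hj
      have hmem : w j ∈ W := Submodule.subset_span (Set.mem_image_of_mem w hj)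
      have := (Submodule.mem_orthogonal W x).mp hxK (w j) hmem
      rw [real_inner_comm] at this
      exact this
    -- the updated family
    set w' : Fin n → EuclideanSpace ℝ (Fin 5) := Function.update w i x with hw'_def
    have hw'i : w' i = x := Function.update_self i x w
    have hvali : (i : ℕ) = m := rfl
    have hw'lt : ∀ j : Fin n, (j : ℕ) < m → w' j = w j := by
      intro j hj
      have hne : j ≠ i := by
        intro h
        rw [h, hvali] at hj
        exact lt_irrefl m hj
      exact Function.update_of_ne hne x w
    have hieq : ∀ j : Fin n, (j : ℕ) < m + 1 → ¬ (j : ℕ) < m → j = i := by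
      intro j h1 h2
      apply Fin.ext
      rw [hvali]; omega
    refine ⟨w', ?_, ?_, ?_, ?_⟩
    · -- orthogonality
      intro i' j hji hi'
      by_cases hi'm : (i' : ℕ) < m
      · have hjm : (j : ℕ) < m := lt_trans hji hi'm
        rw [hw'lt i' hi'm, hw'lt j hjm]
        exact hOR i' j hji hi'm
      · have hii : i' = i := hieq i' hi' hi'm
        subst hii
        have hjm : (j : ℕ) < m := by have := hji; rw [Fin.lt_def, hvali] at this; exact this
        rw [hw'i, hw'lt j hjm]
        by_cases hadj : G.Adj (v i) (v j)
        · have hjS : j ∈ S := by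
            rw [hS_def, Finset.mem_filter]
            exact ⟨Finset.mem_univ _, hji, hadj⟩
          exact iff_of_true (hS0 j hjS) hadj
        · have hjS : j ∉ S := by
            rw [hS_def, Finset.mem_filter]
            rintro ⟨-, -, h⟩; exact hadj h
          have := hker j hjm hjS
          rw [real_inner_comm] at this
          exact iff_of_false this hadj
    · -- nonzero
      intro c hc
      by_cases hcm : (c : ℕ) < m
      · rw [hw'lt c hcm]; exact hN0 c hcm
      · rw [hieq c hc hcm, hw'i]; exact hxne
    · -- pairwise independence
      intro c a hc ha hca
      by_cases hcm : (c : ℕ) < m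
      · by_cases ham : (a : ℕ) < m
        · rw [hw'lt c hcm, hw'lt a ham]; exact hN1 c a hcm ham hca
        · rw [hieq a ha ham, hw'i, hw'lt c hcm]
          exact notMem_span_singleton_new (hsingle c) (hN0 c hcm)
      · have hci : c = i := hieq c hc hcm
        have ham : (a : ℕ) < m := by
          by_contra ham
          exact hca (hci.trans (hieq a ha ham).symm)
        rw [hci, hw'i, hw'lt a ham]
        exact hsingle a
    · -- triple independence
      intro c a b hc ha hb hca hcb hab
      by_cases hcm : (c : ℕ) < m
      · by_cases ham : (a : ℕ) < m
        · by_cases hbm : (b : ℕ) < m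
          · rw [hw'lt c hcm, hw'lt a ham, hw'lt b hbm]
            exact hN2 c a b hcm ham hbm hca hcb hab
          · -- b = i
            rw [hieq b hb hbm, hw'i, hw'lt c hcm, hw'lt a ham, Set.pair_comm]
            exact notMem_span_pair_new (hpair c a) (hN1 c a hcm ham hca)
        · -- a = i, then b < m
          have hbm : (b : ℕ) < m := by
            by_contra hbm
            exact hab ((hieq a ha ham).trans (hieq b hb hbm).symm)
          rw [hieq a ha ham, hw'i, hw'lt c hcm, hw'lt b hbm]
          exact notMem_span_pair_new (hpair c b) (hN1 c b hcm hbm hcb)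
      · have hci : c = i := hieq c hc hcm
        have ham : (a : ℕ) < m := by
          by_contra ham; exact hca (hci.trans (hieq a ha ham).symm)
        have hbm : (b : ℕ) < m := by
          by_contra hbm; exact hcb (hci.trans (hieq b hb hbm).symm)
        rw [hci, hw'i, hw'lt a ham, hw'lt b hbm]
        exact hpair a b



/-- The minimum semidefinite rank of a simple graph `G` on vertex set `Fin n`:
the minimum rank of a real symmetric positive semidefinite matrix whose
off-diagonal zero/nonzero pattern matches the (non-)adjacency of `G`. -/
noncomputable def msr {n : ℕ} (G : SimpleGraph (Fin n)) : ℕ :=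
  sInf { r : ℕ | ∃ A : Matrix (Fin n) (Fin n) ℝ, A.PosSemidef ∧
    (∀ i j : Fin n, i ≠ j → (A i j ≠ 0 ↔ G.Adj i j)) ∧ A.rank = r }

/-- If a simple connected graph `G` with `|G| ≥ 5` can be constructed from a path
`v 1 v 2 v 3` by adding one vertex at a time, each adjacent to at most two prior
vertices, then `msr(Ḡ) ≤ 5`. -/
theorem msr_complement_le_five_of_constructedFromPath {n : ℕ} (hn : 5 ≤ n)
    (G : SimpleGraph (Fin n)) [DecidableRel G.Adj] (hconn : G.Connected)
    (hcon : ∃ v : Equiv.Perm (Fin n), ConstructedFromPathOrder hn G v) :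
    msr Gᶜ ≤ 5 := by
  classical
  obtain ⟨v, -, -, hdeg3⟩ := hcon
  have hdeg : ∀ i : Fin n,
      (Finset.univ.filter (fun j : Fin n => j < i ∧ G.Adj (v i) (v j))).card ≤ 2 := by
    intro i
    by_cases h3 : 3 ≤ (i : ℕ)
    · exact hdeg3 i h3
    · calc (Finset.univ.filter (fun j : Fin n => j < i ∧ G.Adj (v i) (v j))).card
          ≤ (Finset.Iio i).card := by
            apply Finset.card_le_card
            intro j hj
            rw [Finset.mem_filter] at hj
            exact Finset.mem_Iio.mpr hj.2.1
        _ = (i : ℕ) := Fin.card_Iio i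
        _ ≤ 2 := by omega
  obtain ⟨w, hw⟩ := exists_orthogonal_rep G v hdeg
  set u : Fin n → EuclideanSpace ℝ (Fin 5) := fun a => w (v.symm a) with hu_def
  have key : ∀ a b : Fin n, a ≠ b → (⟪u a, u b⟫ = 0 ↔ G.Adj a b) := by
    intro a b hab
    have hab' : v.symm a ≠ v.symm b := fun h => hab (by
      have := congrArg v h; simpa using this)
    rcases lt_or_gt_of_ne hab' with h | h
    · have := hw (v.symm b) (v.symm a) h
      rw [Equiv.apply_symm_apply, Equiv.apply_symm_apply] at this
      rw [real_inner_comm, G.adj_comm]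
      exact this
    · have := hw (v.symm a) (v.symm b) h
      rw [Equiv.apply_symm_apply, Equiv.apply_symm_apply] at this
      exact this
  set B : Matrix (Fin 5) (Fin n) ℝ := Matrix.of (fun k a => u a k) with hB_def
  set A : Matrix (Fin n) (Fin n) ℝ := Bᴴ * B with hA_def
  have hAentry : ∀ a b : Fin n, A a b = ⟪u a, u b⟫ := by
    intro a b
    rw [hA_def, Matrix.mul_apply, PiLp.inner_apply]
    simp [hB_def, Matrix.conjTranspose_apply, RCLike.inner_apply, starRingEnd_apply,
      mul_comm]
  have hmem : A.rank ∈ { r : ℕ | ∃ A : Matrix (Fin n) (Fin n) ℝ, A.PosSemidef ∧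
      (∀ i j : Fin n, i ≠ j → (A i j ≠ 0 ↔ Gᶜ.Adj i j)) ∧ A.rank = r } := by
    refine ⟨A, Matrix.posSemidef_conjTranspose_mul_self B, ?_, rfl⟩
    intro a b hab
    rw [hAentry a b, SimpleGraph.compl_adj]
    constructor
    · intro hne
      exact ⟨hab, fun hadj => hne ((key a b hab).mpr hadj)⟩
    · rintro ⟨-, hnadj⟩ h0
      exact hnadj ((key a b hab).mp h0)
  have hrank : A.rank ≤ 5 := by
    rw [hA_def, Matrix.rank_conjTranspose_mul_self]
    exact le_trans B.rank_le_card_height (by simp)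
  unfold msr
  exact le_trans (Nat.sInf_le hmem) hrank
end

section
/- Let G = (V, E) be a cactus graph with |G| ≥ 5. Then the vertices of G can be ordered v_1, v_2, …, v_n so that v_1 v_2 v_3 is a path in G and, for every m ≥ 4, the vertex v_m is adjacent in G to at most two of the prior vertices v_1, …, v_{m−1}. Equivalently, the complement Ḡ can be constructed by starting with an induced subgraph on three vertices and adding one vertex at a time so that the newest vertex is adjacent in Ḡ to all but at most two of the prior vertices. -/
/-- A cactus graph: a simple connected graph in which every edge belongs to at
most one cycle, i.e. any two cycles sharing a common edge have the same edge set. -/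
def IsCactus {n : ℕ} (G : SimpleGraph (Fin n)) : Prop :=
  G.Connected ∧
    ∀ (u w : Fin n) (p : G.Walk u u) (q : G.Walk w w), p.IsCycle → q.IsCycle →
      ∀ e ∈ p.edges, e ∈ q.edges → ∀ e', (e' ∈ p.edges ↔ e' ∈ q.edges)

/-! Choose a path `x - c - y` and list the remaining vertices by nondecreasing distance from `c`.
A later vertex `t` then only has earlier neighbours `z` with `dist c z ≤ dist c t`, and a
shortest walk from `c` to such a `z` avoids `t`. Three such neighbours, joined to each other
through `c` away from `t`, would close two cycles through the same edge at `t` with different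
edge sets. -/

lemma Monotone.apply_perm_le_of_forall_lt_ne {ι α : Type*} [LinearOrder ι] [Preorder α]
    {f : ι → α} {σ : Equiv.Perm ι} (hσ : Monotone (f ∘ σ)) {i z : ι} (hz : ∀ j < i, σ j ≠ z) :
    f (σ i) ≤ f z := by
  have : i ≤ σ.symm z := not_lt.mp fun hlt => hz _ hlt (σ.apply_symm_apply z)
  simpa using hσ this

lemma Tuple.sort_prefix_eq {n : ℕ} (hn : 3 ≤ n) {key : Fin n → ℕ} {a b c : Fin n}
    (ha : key a = 0) (hb : key b = 1) (hc : key c = 2)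
    (hk : ∀ z, z ≠ a → z ≠ b → z ≠ c → 3 ≤ key z) :
    Tuple.sort key ⟨0, by omega⟩ = a ∧ Tuple.sort key ⟨1, by omega⟩ = b ∧
      Tuple.sort key ⟨2, by omega⟩ = c := by
  have hk₂ : ∀ z ≠ a, z ≠ b → 2 ≤ key z := fun z hza hzb => by
    by_cases hzc : z = c
    · rw [hzc, hc]
    · exact (hk z hza hzb hzc).trans' (by omega)
  have hk₁ : ∀ z ≠ a, 1 ≤ key z := fun z hza => by
    by_cases hzb : z = b
    · rw [hzb, hb]
    · exact (hk₂ z hza hzb).trans' (by omega)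
  set v := Tuple.sort key
  have hmono : Monotone (key ∘ v) := Tuple.monotone_sort key
  have hne : ∀ i j : Fin n, (i : ℕ) ≠ j → v i ≠ v j := fun i j h =>
    v.injective.ne (Fin.ne_of_val_ne h)
  have hlt : ∀ {k : ℕ} (hk : k < n) (j : Fin n), j < ⟨k, hk⟩ → (j : ℕ) < k := fun _ _ h => h
  have h₀ : v ⟨0, by omega⟩ = a := by
    by_contra h
    have := hmono.apply_perm_le_of_forall_lt_ne (i := ⟨0, by omega⟩) (z := a) fun j hj =>
      absurd (hlt _ j hj) (Nat.not_lt_zero _)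
    have := hk₁ _ h
    omega
  have h₁ : v ⟨1, by omega⟩ = b := by
    by_contra h
    have := hmono.apply_perm_le_of_forall_lt_ne (i := ⟨1, by omega⟩) (z := b) fun j hj => by
      rw [show j = ⟨0, by omega⟩ from Fin.ext (by have := hlt _ j hj; simp; omega), h₀]
      rintro rfl
      omega
    have := hk₂ _ (h₀ ▸ hne _ _ (by simp)) h
    omega
  refine ⟨h₀, h₁, ?_⟩
  by_contra h
  have := hmono.apply_perm_le_of_forall_lt_ne (i := ⟨2, by omega⟩) (z := c) fun j hj => by
    obtain hj | hj : (j : ℕ) = 0 ∨ (j : ℕ) = 1 := by have := hlt _ j hj; omega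
    · rw [show j = ⟨0, by omega⟩ from Fin.ext hj, h₀]; rintro rfl; omega
    · rw [show j = ⟨1, by omega⟩ from Fin.ext hj, h₁]; rintro rfl; omega
  have := hk _ (h₀ ▸ hne _ _ (by simp)) (h₁ ▸ hne _ _ (by simp)) h
  omega

lemma Fin.exists_perm_prefix_monotone {n : ℕ} (hn : 3 ≤ n) (d : Fin n → ℕ) {a b c : Fin n}
    (hab : a ≠ b) (hac : a ≠ c) (hbc : b ≠ c) {m : ℕ} (ha : d a ≤ m) (hb : d b ≤ m)
    (hc : d c ≤ m) (hm : ∀ z, z ≠ a → z ≠ b → z ≠ c → m ≤ d z) :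
    ∃ v : Equiv.Perm (Fin n), v ⟨0, by omega⟩ = a ∧ v ⟨1, by omega⟩ = b ∧
      v ⟨2, by omega⟩ = c ∧ ∀ i j : Fin n, 3 ≤ (i : ℕ) → j < i → d (v j) ≤ d (v i) := by
  classical
  set key : Fin n → ℕ := fun z =>
    if z = a then 0 else if z = b then 1 else if z = c then 2 else d z + 3 with hkey
  have hk : ∀ z, z ≠ a → z ≠ b → z ≠ c → key z = d z + 3 := fun z hza hzb hzc => by
    simp only [hkey, hza, hzb, hzc, if_false]
  have hkd : ∀ z, d z ≤ m ∨ key z = d z + 3 := fun z => by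
    by_cases hza : z = a; · exact .inl (hza ▸ ha)
    by_cases hzb : z = b; · exact .inl (hzb ▸ hb)
    by_cases hzc : z = c; · exact .inl (hzc ▸ hc)
    exact .inr (hk z hza hzb hzc)
  obtain ⟨h₀, h₁, h₂⟩ := Tuple.sort_prefix_eq hn (key := key) (by simp [hkey])
    (by simp [hkey, hab.symm]) (by simp [hkey, hac.symm, hbc.symm])
    fun z hza hzb hzc => (hk z hza hzb hzc).symm ▸ by omega
  set v := Tuple.sort key
  refine ⟨v, h₀, h₁, h₂, fun i j hi hji => ?_⟩
  have hne : ∀ k : Fin n, (k : ℕ) < 3 → v i ≠ v k := fun k hk =>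
    v.injective.ne (Fin.ne_of_val_ne (by omega))
  have hva : v i ≠ a := h₀ ▸ hne _ (by simp)
  have hvb : v i ≠ b := h₁ ▸ hne _ (by simp)
  have hvc : v i ≠ c := h₂ ▸ hne _ (by simp)
  have hkey_le : key (v j) ≤ key (v i) := Tuple.monotone_sort key hji.le
  have := hm _ hva hvb hvc
  rw [hk _ hva hvb hvc] at hkey_le
  rcases hkd (v j) with h | h <;> omega

namespace SimpleGraph

variable {V : Type*} {G : SimpleGraph V}

def EdgesInAtMostOneCycle (G : SimpleGraph V) : Prop :=
  ∀ (u w : V) (p : G.Walk u u) (q : G.Walk w w), p.IsCycle → q.IsCycle →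
    ∀ e ∈ p.edges, e ∈ q.edges → ∀ e', (e' ∈ p.edges ↔ e' ∈ q.edges)

lemma Walk.IsPath.isCycle_cons_concat {x u v : V} {p : G.Walk u v} (hp : p.IsPath)
    (hx : x ∉ p.support) (huv : u ≠ v) (hxu : G.Adj x u) (hvx : G.Adj v x) :
    (Walk.cons hxu (p.concat hvx)).IsCycle := by
  refine (Walk.cons_isCycle_iff _ _).mpr ⟨hp.concat hx hvx, fun h => ?_⟩
  rw [Walk.edges_concat, List.concat_eq_append, List.mem_append, List.mem_singleton] at h
  rcases h with h | h
  · exact hx (p.fst_mem_support_of_mem_edges h)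
  · rw [Sym2.eq_iff] at h
    rcases h with ⟨rfl, rfl⟩ | ⟨-, rfl⟩ <;> exact huv rfl

/-- The cycles `x u ⋯ v x` and `x u ⋯ w x` share the edge `xu`, but only the first one
contains `vx`. -/
lemma EdgesInAtMostOneCycle.false_of_three_adj (hG : G.EdgesInAtMostOneCycle)
    {c x u v w : V} (huv : u ≠ v) (huw : u ≠ w) (hvw : v ≠ w)
    (hxu : G.Adj x u) (hxv : G.Adj x v) (hxw : G.Adj x w)
    (pu : G.Walk c u) (pv : G.Walk c v) (pw : G.Walk c w)
    (hu : x ∉ pu.support) (hv : x ∉ pv.support) (hw : x ∉ pw.support) : False := by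
  classical
  have avoid : ∀ {a b : V} (pa : G.Walk c a) (pb : G.Walk c b), x ∉ pa.support →
      x ∉ pb.support → x ∉ (pa.reverse.append pb).bypass.support := fun pa pb ha hb h => by
    rcases (Walk.mem_support_append_iff _ _).mp (Walk.support_bypass_subset_support _ h) with h | h
    · exact ha (by simpa using h)
    · exact hb h
  have hp := avoid pu pv hu hv
  have hq := avoid pu pw hu hw
  have hc₁ := (Walk.bypass_isPath _).isCycle_cons_concat hp huv hxu hxv.symm
  have hc₂ := (Walk.bypass_isPath _).isCycle_cons_concat hq huw hxu hxw.symm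
  have hvx := (hG x x _ _ hc₁ hc₂ s(x, u) (by simp) (by simp) s(v, x)).mp (by simp)
  simp only [Walk.edges_cons, Walk.edges_concat, List.concat_eq_append, List.mem_cons,
    List.mem_append, List.not_mem_nil, or_false, Sym2.eq_iff] at hvx
  rcases hvx with (⟨rfl, -⟩ | ⟨rfl, -⟩) | h | (⟨rfl, -⟩ | ⟨rfl, -⟩)
  · exact G.irrefl hxv
  · exact huv rfl
  · exact hq (Walk.snd_mem_support_of_mem_edges _ h)
  · exact hvw rfl
  · exact G.irrefl hxv

lemma Reachable.exists_walk_notMem_support_of_dist_le {c y z : V} (hcz : G.Reachable c z)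
    (hyz : G.Adj y z) (h : G.dist c z ≤ G.dist c y) : ∃ p : G.Walk c z, y ∉ p.support := by
  classical
  obtain ⟨p, hp⟩ := hcz.exists_walk_length_eq_dist
  refine ⟨p, fun hy => ?_⟩
  have := p.length_takeUntil_lt_length hy hyz.ne
  have := dist_le (p.takeUntil y hy)
  omega

lemma EdgesInAtMostOneCycle.card_le_two (hG : G.EdgesInAtMostOneCycle) (hconn : G.Connected)
    {c y : V} {s : Finset V} (hs : ∀ z ∈ s, G.Adj y z ∧ G.dist c z ≤ G.dist c y) :
    s.card ≤ 2 := by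
  classical
  by_contra! h
  obtain ⟨u, v, w, hu, hv, hw, huv, huw, hvw⟩ := Finset.two_lt_card_iff.mp h
  have avoid := fun z (hz : z ∈ s) =>
    (hconn c z).exists_walk_notMem_support_of_dist_le (hs z hz).1 (hs z hz).2
  obtain ⟨pu, hpu⟩ := avoid u hu
  obtain ⟨pv, hpv⟩ := avoid v hv
  obtain ⟨pw, hpw⟩ := avoid w hw
  exact hG.false_of_three_adj huv huw hvw (hs u hu).1 (hs v hv).1 (hs w hw).1 pu pv pw hpu hpv hpw

lemma Connected.exists_adj_adj_ne [Finite V] (hconn : G.Connected) (hV : 3 ≤ Nat.card V) :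
    ∃ x c y, G.Adj x c ∧ G.Adj c y ∧ x ≠ y := by
  classical
  have := Fintype.ofFinite V
  by_contra! h
  have hdeg : ∀ c, G.degree c ≤ 1 := fun c => Finset.card_le_one.mpr fun a ha b hb =>
    h a c b ((G.mem_neighborFinset c a).mp ha).symm ((G.mem_neighborFinset c b).mp hb)
  have hsum : 2 * G.edgeFinset.card ≤ Nat.card V :=
    calc 2 * G.edgeFinset.card = ∑ c, G.degree c := G.sum_degrees_eq_twice_card_edges.symm
      _ ≤ ∑ _ : V, 1 := Finset.sum_le_sum fun c _ => hdeg c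
      _ = Nat.card V := by simp
  have := hconn.card_vert_le_card_edgeSet_add_one
  rw [Nat.card_eq_fintype_card (α := G.edgeSet), ← edgeFinset_card] at this
  omega

end SimpleGraph

/-- The vertices of a cactus graph `G` with `|G| ≥ 5` can be ordered so that the
first three vertices form a path in `G` and every later vertex is adjacent in `G`
to at most two of the prior vertices. -/
theorem cactus_constructedFromPath {n : ℕ} (hn : 5 ≤ n)
    (G : SimpleGraph (Fin n)) [DecidableRel G.Adj] (hG : IsCactus G) :
    ∃ v : Equiv.Perm (Fin n), ConstructedFromPathOrder hn G v := by
  obtain ⟨hconn, hcycle⟩ := hG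
  obtain ⟨x, c, y, hxc, hcy, hxy⟩ := hconn.exists_adj_adj_ne (by simp; omega)
  obtain ⟨v, hv₀, hv₁, hv₂, hdist⟩ := Fin.exists_perm_prefix_monotone (by omega) (G.dist c)
    hxc.ne hxy hcy.ne (m := 1) (SimpleGraph.dist_le hxc.symm.toWalk) (by simp)
    (SimpleGraph.dist_le hcy.toWalk) fun z _ hzc _ => hconn.pos_dist_of_ne hzc.symm
  refine ⟨v, hv₀ ▸ hv₁ ▸ hxc, hv₁ ▸ hv₂ ▸ hcy, fun i hi => ?_⟩
  calc _ ≤ (Finset.univ.filter fun z => G.Adj (v i) z ∧ G.dist c z ≤ G.dist c (v i)).card :=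
        Finset.card_le_card_of_injOn v (fun j hj => by
          rw [Finset.mem_coe, Finset.mem_filter] at hj ⊢
          exact ⟨Finset.mem_univ _, hj.2.2, hdist i j hi hj.2.1⟩) v.injective.injOn
    _ ≤ 2 := SimpleGraph.EdgesInAtMostOneCycle.card_le_two (G := G) hcycle hconn
        fun z hz => (Finset.mem_filter.mp hz).2
end

section
/- Let G be a cactus graph with |G| ≥ 5. Then the complement Ḡ has an orthogonal representation by pairwise linearly independent vectors in ℝ^5. -/
/-!
A cactus is 2-degenerate: if `b` is an end of a longest path inside a vertex set `s`, all
`s`-neighbours of `b` lie on the path, and two of them other than the second vertex `c` of the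
path would close two different cycles through the edge `bc`.

Along a degeneracy order the vectors are then chosen one at a time in `ℝ⁵`. A new vector must be
orthogonal to the at most two vectors of its earlier neighbours, a subspace of dimension at least
`3`, and must avoid the hyperplanes orthogonal to the earlier non-neighbours and the spans of any
two earlier vectors. Keeping every three vectors linearly independent ensures that none of these
subspaces contains the allowed one, and a vector space over an infinite field is not a finite
union of proper subspaces. The exchange lemma shows that the new family is again in general
position.
-/

open Matrix

open Finset Module Submodule Function
open scoped InnerProductSpace

theorem Submodule.exists_mem_forall_notMem_of_not_le {K E : Type*} [DivisionRing K] [Infinite K]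
    [AddCommGroup E] [Module K E] (W : Submodule K E) (F : Finset (Submodule K E))
    (hF : ∀ p ∈ F, ¬ W ≤ p) : ∃ x ∈ W, ∀ p ∈ F, x ∉ p := by
  by_contra! h
  obtain ⟨⟨p, hp⟩, htop⟩ := Subspace.exists_eq_top_of_iUnion_eq_univ
    (p := fun p : F => (p : Submodule K E).comap W.subtype) <| by
      refine Set.eq_univ_of_forall fun ⟨x, hx⟩ => ?_
      obtain ⟨p, hp, hxp⟩ := h x hx
      exact Set.mem_iUnion.mpr ⟨⟨p, hp⟩, hxp⟩
  exact hF p hp (comap_subtype_eq_top.mp htop)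

section GeneralPosition

variable {ι K M : Type*} [DivisionRing K] [AddCommGroup M] [Module K M]

theorem finrank_span_image_finset_le_s4 (f : ι → M) (T : Finset ι) :
    finrank K (span K (f '' T)) ≤ #T := by
  rw [Set.image_eq_range, ← Fintype.card_coe]
  exact finrank_range_le_card _

variable [DecidableEq ι]

variable (K) in
/-- Equivalently: any `m + 1` of the vectors `f u` with `u ∈ s` are linearly independent. -/
def InGeneralPosition (m : ℕ) (f : ι → M) (s : Finset ι) : Prop :=
  ∀ u ∈ s, ∀ T ⊆ s.erase u, #T ≤ m → f u ∉ span K (f '' T)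

variable {m : ℕ} {f : ι → M} {s t : Finset ι}

theorem InGeneralPosition.linearIndependent_pair (hf : InGeneralPosition K m f s) (hm : 1 ≤ m)
    {u w : ι} (hu : u ∈ s) (hw : w ∈ s) (huw : u ≠ w) : LinearIndependent K ![f u, f w] := by
  refine linearIndependent_fin2.mpr ⟨fun h => ?_, fun a h => ?_⟩
  · exact hf w hw ∅ (empty_subset _) (Nat.zero_le m) (by simpa using h)
  · refine hf u hu {w} (singleton_subset_iff.mpr (mem_erase.mpr ⟨huw.symm, hw⟩)) (by simpa) ?_
    simpa [mem_span_singleton] using ⟨a, h⟩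

theorem InGeneralPosition.update_insert (hf : InGeneralPosition K m f t)
    {v : ι} (hv : v ∉ t) {x : M} (hx : ∀ T ⊆ t, #T ≤ m → x ∉ span K (f '' T)) :
    InGeneralPosition K m (update f v x) (insert v t) := by
  have himage : ∀ T ⊆ t, update f v x '' T = f '' T := fun T hT =>
    Set.image_congr fun u hu => update_of_ne (ne_of_mem_of_not_mem (hT hu) hv) x f
  intro u hu T hT hTm
  rcases mem_insert.mp hu with rfl | hu
  · have hTt : T ⊆ t := by rwa [erase_insert hv] at hT
    rw [update_self, himage T hTt]
    exact hx T hTt hTm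
  rw [update_of_ne (ne_of_mem_of_not_mem hu hv)]
  by_cases hvT : v ∈ T
  · set T' := T.erase v
    have hT' : T' ⊆ t.erase u := by
      intro y hy
      obtain ⟨hyv, hyT⟩ := mem_erase.mp hy
      obtain ⟨hyu, hy⟩ := mem_erase.mp (hT hyT)
      exact mem_erase.mpr ⟨hyu, (mem_insert.mp hy).resolve_left hyv⟩
    have hT'm : #T' < m := by
      have := card_pos.mpr ⟨v, hvT⟩
      rw [card_erase_of_mem hvT]
      omega
    intro hmem
    rw [← insert_erase hvT, coe_insert, Set.image_insert_eq, update_self,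
      himage T' (hT'.trans (erase_subset _ _))] at hmem
    have := mem_span_insert_exchange hmem (hf u hu T' hT' hT'm.le)
    rw [← Set.image_insert_eq, ← coe_insert] at this
    refine hx (insert u T') (insert_subset hu (hT'.trans (erase_subset _ _))) ?_ this
    exact (card_insert_le _ _).trans hT'm
  · have hTt : T ⊆ t.erase u := fun y hyT => by
      obtain ⟨hyu, hy⟩ := mem_erase.mp (hT hyT)
      exact mem_erase.mpr ⟨hyu, (mem_insert.mp hy).resolve_left (fun h => hvT (h ▸ hyT))⟩
    rw [himage T (hTt.trans (erase_subset _ _))]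
    exact hf u hu T hTt hTm

end GeneralPosition

namespace SimpleGraph

variable {V : Type*} (G : SimpleGraph V)

def EachEdgeInAtMostOneCycle : Prop :=
  ∀ (u w : V) (p : G.Walk u u) (q : G.Walk w w), p.IsCycle → q.IsCycle →
    ∀ e ∈ p.edges, e ∈ q.edges → ∀ e', (e' ∈ p.edges ↔ e' ∈ q.edges)

open Classical in
def IsDegenerate (k : ℕ) : Prop :=
  ∀ s : Finset V, s.Nonempty → ∃ v ∈ s, #{w ∈ s | G.Adj v w} ≤ k

variable {G}

theorem exists_isPath_forall_adj_mem_support {s : Finset V} (hs : s.Nonempty) :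
    ∃ (b a : V) (p : G.Walk b a), p.IsPath ∧ (∀ x ∈ p.support, x ∈ s) ∧
      ∀ w ∈ s, G.Adj b w → w ∈ p.support := by
  classical
  by_contra! h
  have long : ∀ k : ℕ, ∃ (b a : V) (p : G.Walk b a), p.IsPath ∧ (∀ x ∈ p.support, x ∈ s) ∧
      k ≤ p.length := by
    intro k
    induction k with
    | zero =>
      obtain ⟨v, hv⟩ := hs
      exact ⟨v, v, .nil, .nil, by simpa, le_rfl⟩
    | succ k ih =>
      obtain ⟨b, a, p, hp, hps, hk⟩ := ih
      obtain ⟨w, hws, hbw, hwp⟩ := h b a p hp hps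
      refine ⟨w, a, .cons hbw.symm p, hp.cons hwp, fun x hx => ?_, by simpa using hk⟩
      rcases (Walk.mem_support_iff _).mp hx with rfl | hx
      · exact hws
      · exact hps x hx
  obtain ⟨b, a, p, hp, hps, hk⟩ := long #s
  have := card_le_card fun x hx => hps x (List.mem_toFinset.mp hx)
  rw [List.toFinset_card_of_nodup hp.support_nodup, Walk.length_support] at this
  omega

theorem Walk.IsPath.exists_isCycle_cons_takeUntil [DecidableEq V] {b a w : V} {p : G.Walk b a}
    (hp : p.IsPath) (hw : w ∈ p.support) (hbw : G.Adj b w) (hwsnd : w ≠ p.snd) :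
    ∃ c : G.Walk b b, c.IsCycle ∧ s(b, p.snd) ∈ c.edges ∧ s(b, w) ∈ c.edges ∧
      c.edges ⊆ s(b, w) :: p.edges := by
  set q := p.takeUntil w hw
  have hqp : q.edges ⊆ p.edges := p.edges_takeUntil_subset_edges hw
  have hq : ¬ q.Nil := Walk.not_nil_of_ne hbw.ne
  have hqsnd : q.snd = p.snd := hp.eq_snd_of_mem_edges (hqp (Walk.mk_start_snd_mem_edges hq))
  refine ⟨.cons hbw q.reverse, ?_, ?_, by simp, ?_⟩
  · refine (Walk.cons_isCycle_iff _ _).mpr ⟨(hp.takeUntil hw).reverse, fun h => hwsnd ?_⟩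
    rw [Walk.edges_reverse, List.mem_reverse] at h
    exact hp.eq_snd_of_mem_edges (hqp h)
  · rw [← hqsnd, Walk.edges_cons, Walk.edges_reverse, List.mem_cons, List.mem_reverse]
    exact .inr (Walk.mk_start_snd_mem_edges hq)
  · intro e he
    simp only [Walk.edges_cons, Walk.edges_reverse, List.mem_cons, List.mem_reverse] at he ⊢
    exact he.imp_right (@hqp e)

theorem EachEdgeInAtMostOneCycle.isDegenerate_two (hG : G.EachEdgeInAtMostOneCycle) :
    G.IsDegenerate 2 := by
  classical
  intro s hs
  obtain ⟨b, a, p, hp, hps, hnbr⟩ := exists_isPath_forall_adj_mem_support (G := G) hs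
  refine ⟨b, hps b p.start_mem_support, ?_⟩
  by_contra! h3
  obtain ⟨w₁, hw₁, w₂, hw₂, hne⟩ :=
      one_lt_card.mp <| show 1 < #({w ∈ s | G.Adj b w}.erase p.snd) by
    have := pred_card_le_card_erase (s := {w ∈ s | G.Adj b w}) (a := p.snd)
    omega
  simp only [mem_erase, mem_filter] at hw₁ hw₂
  have cycle := fun w (hw : w ≠ p.snd ∧ w ∈ s ∧ G.Adj b w) =>
    hp.exists_isCycle_cons_takeUntil (hnbr w hw.2.1 hw.2.2) hw.2.2 hw.1
  obtain ⟨c₁, hc₁, hsnd₁, -, hc₁p⟩ := cycle w₁ hw₁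
  obtain ⟨c₂, hc₂, hsnd₂, hw₂c₂, -⟩ := cycle w₂ hw₂
  have hw₂c₁ := (hG b b c₁ c₂ hc₁ hc₂ _ hsnd₁ hsnd₂ _).mpr hw₂c₂
  rcases List.mem_cons.mp (hc₁p hw₂c₁) with h | h
  · exact hne (Sym2.congr_right.mp h).symm
  · exact hw₂.1 (hp.eq_snd_of_mem_edges h)

end SimpleGraph

section OrthogonalRepresentation

variable {ι V 𝕜 E : Type*} [RCLike 𝕜] [NormedAddCommGroup E] [InnerProductSpace 𝕜 E]

theorem InGeneralPosition.exists_inner_eq_zero_iff_mem [DecidableEq ι] [FiniteDimensional 𝕜 E]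
    {m : ℕ} {f : ι → E} {t S : Finset ι} (hf : InGeneralPosition 𝕜 m f t) (hSt : S ⊆ t)
    (hSm : #S ≤ m) (hdim : #S + m < finrank 𝕜 E) :
    ∃ x : E, (∀ u ∈ t, ⟪f u, x⟫_𝕜 = 0 ↔ u ∈ S) ∧ ∀ T ⊆ t, #T ≤ m → x ∉ span 𝕜 (f '' T) := by
  have hW : m < finrank 𝕜 (span 𝕜 (f '' S))ᗮ := by
    have := (span 𝕜 (f '' S)).finrank_add_finrank_orthogonal
    have := finrank_span_image_finset_le_s4 (K := 𝕜) f S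
    omega
  set W := (span 𝕜 (f '' S))ᗮ
  set hyperplanes := (t \ S).image fun u => (𝕜 ∙ f u)ᗮ
  set spans := {T ∈ t.powerset | #T ≤ m}.image fun T : Finset ι => span 𝕜 (f '' T)
  obtain ⟨x, hxW, hx⟩ := W.exists_mem_forall_notMem_of_not_le (hyperplanes ∪ spans) <| by
    intro p hp hWp
    rcases mem_union.mp hp with hp | hp
    · obtain ⟨u, hu, rfl⟩ := mem_image.mp hp
      obtain ⟨hut, huS⟩ := mem_sdiff.mp hu
      rw [orthogonal_le_orthogonal_iff, span_singleton_le_iff_mem] at hWp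
      exact hf u hut S (subset_erase.mpr ⟨hSt, huS⟩) hSm hWp
    · obtain ⟨T, hT, rfl⟩ := mem_image.mp hp
      have := finrank_span_image_finset_le_s4 (K := 𝕜) f T
      have := Submodule.finrank_mono hWp
      have := (mem_filter.mp hT).2
      omega
  refine ⟨x, fun u hu => ⟨fun hux => ?_, fun huS => ?_⟩, fun T hT hTm hxT => ?_⟩
  · by_contra huS
    refine hx _ (mem_union_left _ (mem_image_of_mem _ (mem_sdiff.mpr ⟨hu, huS⟩))) ?_
    exact mem_orthogonal_singleton_iff_inner_right.mpr hux
  · exact (mem_orthogonal _ _).mp hxW _ (subset_span (Set.mem_image_of_mem f huS))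
  · exact hx _ (mem_union_right _ (mem_image_of_mem _ (by simp [hT, hTm]))) hxT

variable (𝕜) in
def IsOrthogonalRepresentationOn (H : SimpleGraph V) (f : V → E) (s : Finset V) : Prop :=
  ∀ u ∈ s, ∀ w ∈ s, u ≠ w → (⟪f u, f w⟫_𝕜 ≠ 0 ↔ H.Adj u w)

theorem IsOrthogonalRepresentationOn.update_insert [DecidableEq V] {H : SimpleGraph V}
    {f : V → E} {t : Finset V} (hf : IsOrthogonalRepresentationOn 𝕜 H f t) {v : V} (hv : v ∉ t)
    {x : E} (hx : ∀ u ∈ t, ⟪f u, x⟫_𝕜 ≠ 0 ↔ H.Adj u v) :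
    IsOrthogonalRepresentationOn 𝕜 H (update f v x) (insert v t) := by
  have hft : ∀ u ∈ t, update f v x u = f u := fun u hu =>
    update_of_ne (ne_of_mem_of_not_mem hu hv) x f
  intro u hu w hw huw
  rcases mem_insert.mp hu with rfl | hut <;> rcases mem_insert.mp hw with rfl | hwt
  · exact absurd rfl huw
  · rw [update_self, hft w hwt, H.adj_comm, ← hx w hwt, Ne, Ne, inner_eq_zero_symm]
  · rw [update_self, hft u hut]
    exact hx u hut
  · rw [hft u hut, hft w hwt]
    exact hf u hut w hwt huw

theorem exists_isOrthogonalRepresentationOn_compl [DecidableEq V] [FiniteDimensional 𝕜 E]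
    {G : SimpleGraph V} {k m : ℕ} (hG : G.IsDegenerate k) (hkm : k ≤ m)
    (hdim : k + m < finrank 𝕜 E) (s : Finset V) :
    ∃ f : V → E, IsOrthogonalRepresentationOn 𝕜 Gᶜ f s ∧ InGeneralPosition 𝕜 m f s := by
  classical
  induction s using Finset.strongInduction with
  | H s ih =>
  rcases s.eq_empty_or_nonempty with rfl | hs
  · exact ⟨0, by simp [IsOrthogonalRepresentationOn], by simp [InGeneralPosition]⟩
  obtain ⟨v, hv, hdeg⟩ := hG s hs
  obtain ⟨f, hrep, hgp⟩ := ih (s.erase v) (erase_ssubset hv)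
  have hS : {w ∈ s | G.Adj v w} ⊆ s.erase v := fun w hw => by
    rw [mem_filter] at hw
    exact mem_erase.mpr ⟨hw.2.ne', hw.1⟩
  obtain ⟨x, hxS, hxT⟩ := hgp.exists_inner_eq_zero_iff_mem hS (hdeg.trans hkm) (by omega)
  rw [← insert_erase hv]
  refine ⟨update f v x, hrep.update_insert (notMem_erase v s) fun u hu => ?_,
    hgp.update_insert (notMem_erase v s) hxT⟩
  rw [Ne, hxS u hu, mem_filter, SimpleGraph.compl_adj, G.adj_comm]
  simp [ne_of_mem_erase hu, mem_of_mem_erase hu]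

end OrthogonalRepresentation

theorem cactus_complement_has_orthogonal_representation_general {n : ℕ}
    (G : SimpleGraph (Fin n)) (hG : IsCactus G) :
    ∃ f : Fin n → (Fin 5 → ℝ),
      (∀ u w : Fin n, u ≠ w → (f u ⬝ᵥ f w ≠ 0 ↔ Gᶜ.Adj u w)) ∧
      (∀ u w : Fin n, u ≠ w → LinearIndependent ℝ ![f u, f w]) := by
  obtain ⟨f, hrep, hgp⟩ := exists_isOrthogonalRepresentationOn_compl (𝕜 := ℝ)
    (E := EuclideanSpace ℝ (Fin 5)) (SimpleGraph.EachEdgeInAtMostOneCycle.isDegenerate_two hG.2)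
    le_rfl (by simp) univ
  refine ⟨fun u => (f u).ofLp, fun u w huw => ?_, fun u w huw => ?_⟩
  · have : (f u).ofLp ⬝ᵥ (f w).ofLp = ⟪f u, f w⟫_ℝ := by
      simp [EuclideanSpace.inner_eq_star_dotProduct, dotProduct_comm]
    rw [this]
    exact hrep u (mem_univ u) w (mem_univ w) huw
  · have h := hgp.linearIndependent_pair one_le_two (mem_univ u) (mem_univ w) huw
    rw [LinearIndependent.pair_iff] at h ⊢
    exact fun a b hab => h a b (WithLp.ofLp_injective 2 (by simpa using hab))

/-- If `G` is a cactus graph with `|G| ≥ 5`, then the complement `Ḡ` has an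
orthogonal representation by pairwise linearly independent vectors in `ℝ⁵`. -/
theorem cactus_complement_has_orthogonal_representation {n : ℕ} (hn : 5 ≤ n)
    (G : SimpleGraph (Fin n)) (hG : IsCactus G) :
    ∃ f : Fin n → (Fin 5 → ℝ),
      (∀ u w : Fin n, u ≠ w → (f u ⬝ᵥ f w ≠ 0 ↔ Gᶜ.Adj u w)) ∧
      (∀ u w : Fin n, u ≠ w → LinearIndependent ℝ ![f u, f w]) :=
  cactus_complement_has_orthogonal_representation_general G hG
end

section
/- Let G = (V, E) be a cactus graph containing exactly one cycle (i.e., G is connected unicyclic, so |E| = |V|). Then the tree cover number of G equals 2, i.e., T(G) = 2. -/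
/-- The tree cover number of `G`: the minimum number of pairwise vertex-disjoint
induced subgraphs of `G`, each of which is a tree, whose vertex sets cover all
vertices of `G`. -/
noncomputable def treeCoverNumber {n : ℕ} (G : SimpleGraph (Fin n)) : ℕ :=
  sInf { k : ℕ | ∃ 𝒯 : Finset (Set (Fin n)), 𝒯.card = k ∧
    (∀ S ∈ 𝒯, (G.induce S).IsTree) ∧
    (𝒯 : Set (Set (Fin n))).PairwiseDisjoint id ∧
    (∀ v : Fin n, ∃ S ∈ 𝒯, v ∈ S) }

namespace SimpleGraph

variable {V : Type*} {G H : SimpleGraph V}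

/-- `treeCoverNumber G` is, by definition, the least cardinality of a `G.IsTreeCover`. -/
def IsTreeCover (G : SimpleGraph V) (𝒯 : Finset (Set V)) : Prop :=
  (∀ S ∈ 𝒯, (G.induce S).IsTree) ∧ (𝒯 : Set (Set V)).PairwiseDisjoint id ∧
    ∀ v, ∃ S ∈ 𝒯, v ∈ S

lemma IsTreeCover.two_le_card [Nonempty V] {𝒯 : Finset (Set V)} (h𝒯 : G.IsTreeCover 𝒯)
    (hG : ¬ G.IsTree) : 2 ≤ 𝒯.card := by
  by_contra! hcard
  obtain ⟨htree, -, hcover⟩ := h𝒯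
  obtain ⟨S, hS, -⟩ := hcover (Classical.arbitrary V)
  have hS_univ : S = Set.univ := Set.eq_univ_of_forall fun v => by
    obtain ⟨T, hT, hv⟩ := hcover v
    rwa [Finset.card_le_one.1 (Nat.le_of_lt_succ hcard) T hT S hS] at hv
  exact hG <| (induceUnivIso G).isTree_iff.1 (hS_univ ▸ htree S hS)

lemma not_isTree_of_card_edgeSet_eq [Finite V] (hcard : Nat.card G.edgeSet = Nat.card V) :
    ¬ G.IsTree := fun h => by
  have := (isTree_iff_connected_and_card.1 h).2
  omega

lemma Connected.exists_adj_isTree_deleteEdges [Finite V] (hG : G.Connected)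
    (hcard : Nat.card G.edgeSet = Nat.card V) :
    ∃ a b, G.Adj a b ∧ (G.deleteEdges {s(a, b)}).IsTree := by
  have := hG.nonempty
  have hnt : ¬ G.IsAcyclic := fun h => not_isTree_of_card_edgeSet_eq hcard ⟨hG, h⟩
  obtain ⟨a, b, hab, hbridge⟩ : ∃ a b, G.Adj a b ∧ ¬ G.IsBridge s(a, b) := by
    simpa [isAcyclic_iff_forall_adj_isBridge] using hnt
  refine ⟨a, b, hab, isTree_iff_connected_and_card.2
    ⟨hG.connected_delete_edge_of_not_isBridge hbridge, ?_⟩⟩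
  rw [edgeSet_deleteEdges, Nat.card_coe_set_eq,
    Set.ncard_sdiff_singleton_of_mem (G.mem_edgeSet.2 hab), ← Nat.card_coe_set_eq, hcard]
  have := Nat.card_pos (α := V)
  omega

lemma Connected.reachable_or_reachable_deleteEdges (hG : G.Connected) (a c v : V) :
    (G.deleteEdges {s(a, c)}).Reachable v a ∨ (G.deleteEdges {s(a, c)}).Reachable v c := by
  set H := G.deleteEdges {s(a, c)}
  suffices ∀ {u w : V}, G.Walk u w → H.Reachable w a ∨ H.Reachable w c →
      H.Reachable u a ∨ H.Reachable u c from this (hG.preconnected v a).some (.inl .rfl)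
  intro u w p
  induction p with
  | nil => exact id
  | @cons u x w hux p ih =>
    intro hw
    by_cases he : s(u, x) = s(a, c)
    · rcases Sym2.eq_iff.1 he with ⟨rfl, -⟩ | ⟨rfl, -⟩
      exacts [.inl .rfl, .inr .rfl]
    · have hux' : H.Adj u x := by simp [H, hux, he]
      exact (ih hw).imp hux'.reachable.trans hux'.reachable.trans

lemma isTree_induce_supp (hHG : H ≤ G) (hH : H.IsAcyclic)
    (hcross : ∀ ⦃x y⦄, G.Adj x y → ¬ H.Adj x y →
      H.connectedComponentMk x ≠ H.connectedComponentMk y)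
    (C : H.ConnectedComponent) : (G.induce C.supp).IsTree := by
  have hC : G.induce C.supp = C.toSimpleGraph := by
    ext ⟨x, hx⟩ ⟨y, hy⟩
    refine ⟨fun hxy => ?_, fun hxy => hHG hxy⟩
    by_contra hn
    exact hcross hxy hn (hx.trans hy.symm)
  rw [hC]
  exact hH.isTree_connectedComponent C

lemma isTreeCover_pair_supp [DecidableEq (Set V)] (hHG : H ≤ G) (hH : H.IsAcyclic)
    (hcross : ∀ ⦃x y⦄, G.Adj x y → ¬ H.Adj x y →
      H.connectedComponentMk x ≠ H.connectedComponentMk y)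
    {C D : H.ConnectedComponent} (hCD : C ≠ D) (hcover : ∀ v, v ∈ C.supp ∨ v ∈ D.supp) :
    G.IsTreeCover {C.supp, D.supp} := by
  refine ⟨?_, ?_, fun v => ?_⟩
  · simp only [Finset.mem_insert, Finset.mem_singleton, forall_eq_or_imp, forall_eq]
    exact ⟨isTree_induce_supp hHG hH hcross C, isTree_induce_supp hHG hH hcross D⟩
  · rw [Finset.coe_pair]
    exact Set.pairwise_pair_of_symm.2 fun _ => pairwise_disjoint_supp_connectedComponent H hCD
  · rcases hcover v with hv | hv
    exacts [⟨C.supp, by simp, hv⟩, ⟨D.supp, by simp, hv⟩]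

lemma exists_isTreeCover_pair_of_isTree_deleteEdges [DecidableEq (Set V)] {a b : V}
    (hab : G.Adj a b) (hT : (G.deleteEdges {s(a, b)}).IsTree) :
    ∃ A B : Set V, A ≠ B ∧ G.IsTreeCover {A, B} := by
  classical
  set T := G.deleteEdges {s(a, b)}
  obtain ⟨p, hp⟩ : ∃ p : T.Walk a b, p.IsPath :=
    ⟨_, ((hT.connected.preconnected a b).some.toPath).2⟩
  cases p with
  | nil => exact absurd rfl hab.ne
  | @cons _ c _ hac r =>
  set H := T.deleteEdges {s(a, c)}
  have hnac : ¬ H.Reachable a c := isAcyclic_iff_forall_adj_isBridge.1 hT.isAcyclic hac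
  have hcb : H.Reachable c b := by
    refine ⟨r.toDeleteEdges {s(a, c)} fun e he hea => ?_⟩
    rw [Set.mem_singleton_iff] at hea
    subst hea
    exact ((Walk.cons_isPath_iff hac r).1 hp).2 (r.fst_mem_support_of_mem_edges he)
  have hne : H.connectedComponentMk a ≠ H.connectedComponentMk c :=
    fun h => hnac (ConnectedComponent.exact h)
  have hbc : H.connectedComponentMk b = H.connectedComponentMk c :=
    (ConnectedComponent.sound hcb).symm
  have hcross : ∀ ⦃x y⦄, G.Adj x y → ¬ H.Adj x y →
      H.connectedComponentMk x ≠ H.connectedComponentMk y := by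
    intro x y hxy hn
    have hmissing : s(x, y) = s(a, b) ∨ s(x, y) = s(a, c) := by
      by_contra! h
      exact hn <| (deleteEdges_adj ..).2 ⟨(deleteEdges_adj ..).2 ⟨hxy, h.1⟩, h.2⟩
    rcases hmissing with h | h <;> rcases Sym2.eq_iff.1 h with ⟨rfl, rfl⟩ | ⟨rfl, rfl⟩
    exacts [hbc ▸ hne, hbc ▸ hne.symm, hne, hne.symm]
  refine ⟨_, _, fun h => hne (ConnectedComponent.supp_inj.1 h),
    isTreeCover_pair_supp (H := H) (deleteEdges_le _ |>.trans (deleteEdges_le _))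
      (hT.isAcyclic.anti (deleteEdges_le _)) hcross hne fun v => ?_⟩
  exact (hT.connected.reachable_or_reachable_deleteEdges a c v).imp
    ConnectedComponent.sound ConnectedComponent.sound

end SimpleGraph

open SimpleGraph

lemma treeCoverNumber_eq_two_of_not_isTree {n : ℕ} [Nonempty (Fin n)]
    {G : SimpleGraph (Fin n)} (hG : ¬ G.IsTree) {𝒯 : Finset (Set (Fin n))}
    (h𝒯 : G.IsTreeCover 𝒯) (hcard : 𝒯.card = 2) :
    treeCoverNumber G = 2 :=
  le_antisymm (hcard ▸ Nat.sInf_le ⟨𝒯, rfl, h𝒯⟩)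
    (le_csInf ⟨_, 𝒯, rfl, h𝒯⟩ fun _ ⟨_, hk, h𝒮⟩ => hk ▸ IsTreeCover.two_le_card h𝒮 hG)

/-- A cactus graph with exactly one cycle (a connected unicyclic graph, i.e.
`|E| = |V|`) has tree cover number 2. -/
theorem treeCoverNumber_eq_two_of_unicyclic_cactus {n : ℕ}
    (G : SimpleGraph (Fin n)) [DecidableRel G.Adj] (hG : IsCactus G)
    (hE : G.edgeFinset.card = n) :
    treeCoverNumber G = 2 := by
  classical
  have hconn : G.Connected := hG.1
  have := hconn.nonempty
  have hcard : Nat.card G.edgeSet = Nat.card (Fin n) := by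
    rwa [Nat.card_fin, Nat.card_eq_fintype_card, ← edgeFinset_card]
  obtain ⟨a, b, hab, hT⟩ := hconn.exists_adj_isTree_deleteEdges hcard
  obtain ⟨A, B, hAB, hcover⟩ := exists_isTreeCover_pair_of_isTree_deleteEdges hab hT
  exact treeCoverNumber_eq_two_of_not_isTree (not_isTree_of_card_edgeSet_eq hcard) hcover
    (Finset.card_pair hAB)
end

section
/- For every n ≥ 6, the cycle C_n is a C-δ graph; that is, its vertices can be labeled v_1, …, v_n so that the subgraph of C_n induced by {v_1, v_2, v_3} is either K_3 or P_3, and for every m ≥ 4 the vertex v_m is adjacent in C_n to at most ⌊m/2 − 1⌋ of the prior vertices v_1, …, v_{m−1}. Equivalently, the complement of C_n (for n ≥ 6) is a δ-graph. -/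
/-- `G` is a C-δ graph: its vertices can be labeled `v 0, v 1, …, v (n-1)` so
that the subgraph induced by the first three vertices is `K₃` or `P₃` (i.e.
exactly three or exactly two edges among them, listed case by case), and for
each `m ≥ 4` (one-indexed, so `3 ≤ i` zero-indexed with `m = i + 1`), the vertex
`v i` is adjacent to at most `⌊m/2 - 1⌋` of the prior vertices. -/
def IsCDeltaGraph {n : ℕ} (hn : 4 ≤ n) (G : SimpleGraph (Fin n))
    [DecidableRel G.Adj] : Prop :=
  ∃ v : Equiv.Perm (Fin n),
    (let a := v ⟨0, by omega⟩; let b := v ⟨1, by omega⟩; let c := v ⟨2, by omega⟩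
     (G.Adj a b ∧ G.Adj a c ∧ G.Adj b c) ∨
     (G.Adj a b ∧ G.Adj a c ∧ ¬G.Adj b c) ∨
     (G.Adj a b ∧ ¬G.Adj a c ∧ G.Adj b c) ∨
     (¬G.Adj a b ∧ G.Adj a c ∧ G.Adj b c)) ∧
    ∀ i : Fin n, 3 ≤ (i : ℕ) →
      (Finset.univ.filter (fun j : Fin n => j < i ∧ G.Adj (v i) (v j))).card ≤
        ((i : ℕ) + 1) / 2 - 1

/-- `G` is a δ-graph: its vertices can be labeled `v 0, v 1, …, v (n-1)` so that
the subgraph induced by the first three vertices is `3K₁` or `K₂ ⊔ K₁`, and for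
each `m ≥ 4` (one-indexed, so `3 ≤ i` zero-indexed with `m = i + 1`), the vertex
`v i` is adjacent to all prior vertices except for at most `⌊m/2 - 1⌋` of them. -/
def IsDeltaGraph {n : ℕ} (hn : 4 ≤ n) (G : SimpleGraph (Fin n))
    [DecidableRel G.Adj] : Prop :=
  ∃ v : Equiv.Perm (Fin n),
    (let a := v ⟨0, by omega⟩; let b := v ⟨1, by omega⟩; let c := v ⟨2, by omega⟩
     (¬G.Adj a b ∧ ¬G.Adj a c ∧ ¬G.Adj b c) ∨
     (G.Adj a b ∧ ¬G.Adj a c ∧ ¬G.Adj b c) ∨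
     (¬G.Adj a b ∧ G.Adj a c ∧ ¬G.Adj b c) ∨
     (¬G.Adj a b ∧ ¬G.Adj a c ∧ G.Adj b c)) ∧
    ∀ i : Fin n, 3 ≤ (i : ℕ) →
      (Finset.univ.filter (fun j : Fin n => j < i ∧ ¬ G.Adj (v i) (v j))).card ≤
        ((i : ℕ) + 1) / 2 - 1


/-! Label the vertices of `Cₙ` in cyclic order. Then `v₁ v₂ v₃` is a path, and every later
vertex `v_m` has only `v_{m-1}` as an earlier neighbour, except `v_n`, which also sees `v₁`;
since `⌊n/2 - 1⌋ ≥ 2` for `n ≥ 6`, the bound holds. A C-δ labelling of `G` is a δ labelling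
of `Gᶜ`, as distinct vertices are adjacent in exactly one of the two. -/

open Finset SimpleGraph

lemma cycleGraph_adj_of_lt {n : ℕ} {i j : Fin n} (hji : j < i) :
    (cycleGraph n).Adj i j ↔ (j : ℕ) + 1 = i ∨ ((j : ℕ) = 0 ∧ (i : ℕ) + 1 = n) := by
  rw [cycleGraph_adj', Fin.coe_sub_iff_le.mpr hji.le, Fin.coe_sub_iff_lt.mpr hji]
  have : (j : ℕ) < i := hji
  omega

lemma card_filter_lt_cycleGraph_adj_le_two {n : ℕ} (i : Fin n) :
    #{j | j < i ∧ (cycleGraph n).Adj i j} ≤ 2 := by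
  calc #{j | j < i ∧ (cycleGraph n).Adj i j}
      ≤ #({(i : ℕ) - 1, 0} : Finset ℕ) := by
        refine card_le_card_of_injOn Fin.val (fun j hj => ?_) Fin.val_injective.injOn
        obtain ⟨-, hji, hadj⟩ := mem_filter.mp (mem_coe.mp hj)
        have := (cycleGraph_adj_of_lt hji).mp hadj
        simp only [coe_insert, coe_singleton, Set.mem_insert_iff, Set.mem_singleton_iff]
        omega
    _ ≤ 2 := card_le_two

lemma card_filter_lt_cycleGraph_adj_le_one {n : ℕ} (i : Fin n) (hi : (i : ℕ) + 1 ≠ n) :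
    #{j | j < i ∧ (cycleGraph n).Adj i j} ≤ 1 := by
  calc #{j | j < i ∧ (cycleGraph n).Adj i j}
      ≤ #({(i : ℕ) - 1} : Finset ℕ) := by
        refine card_le_card_of_injOn Fin.val (fun j hj => ?_) Fin.val_injective.injOn
        obtain ⟨-, hji, hadj⟩ := mem_filter.mp (mem_coe.mp hj)
        have := (cycleGraph_adj_of_lt hji).mp hadj
        simp only [coe_singleton, Set.mem_singleton_iff]
        omega
    _ = 1 := card_singleton _

theorem IsCDeltaGraph.compl {n : ℕ} {hn : 4 ≤ n} {G : SimpleGraph (Fin n)} [DecidableRel G.Adj]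
    (h : IsCDeltaGraph hn G) : IsDeltaGraph hn Gᶜ := by
  obtain ⟨v, hfirst, hbound⟩ := h
  refine ⟨v, ?_, fun i hi => ?_⟩
  · simp only [compl_adj, ne_eq, EmbeddingLike.apply_eq_iff_eq, Fin.mk.injEq]
    tauto
  · convert hbound i hi using 3 with j
    simp only [compl_adj, v.injective.ne_iff, not_and, not_not]
    exact ⟨fun ⟨hji, h⟩ => ⟨hji, h hji.ne'⟩, fun ⟨hji, h⟩ => ⟨hji, fun _ => h⟩⟩

/-- For every `n ≥ 6`, the cycle `Cₙ` is a C-δ graph and, equivalently, its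
complement is a δ-graph. -/
theorem cycleGraph_isCDeltaGraph {n : ℕ} (hn : 6 ≤ n) :
    IsCDeltaGraph (by omega) (SimpleGraph.cycleGraph n) ∧
    IsDeltaGraph (by omega) (SimpleGraph.cycleGraph n)ᶜ := by
  have hcycle : IsCDeltaGraph (by omega) (cycleGraph n) := by
    refine ⟨Equiv.refl _, ?_, fun i hi => ?_⟩
    · simp only [Equiv.refl_apply]
      refine Or.inr (Or.inr (Or.inl ⟨?_, ?_, ?_⟩)) <;>
        rw [adj_comm, cycleGraph_adj_of_lt (by simp [Fin.lt_def]), Fin.val_mk, Fin.val_mk] <;>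
        omega
    · by_cases hlast : (i : ℕ) + 1 = n
      · exact (card_filter_lt_cycleGraph_adj_le_two i).trans (by omega)
      · exact (card_filter_lt_cycleGraph_adj_le_one i hlast).trans (by omega)
  exact ⟨hcycle, hcycle.compl⟩
end
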